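/- Let G be any graph and let v be an assignment in a Schelling game on G such that there exists an agent i of some type T_l with the property that every other agent of type T_l is adjacent only to agents of type T_l. Then v is a swap-equilibrium. -/

import Mathlib

/-!
Let `i₀` be the distinguished agent and `T` its type. In a swap between an agent `x` of type `T`
and an agent `y` of the other type, one of the two movers ends up with no friend at all:
if `x ≠ i₀`, every neighbour of `x` has type `T`, so `y` is alone at `x`; if `x = i₀`, a
neighbour of `y` of type `T` other than `i₀` would have `y` as an enemy neighbour, so `i₀` is
alone at `y`. A utility of `0` cannot be a strict improvement.
-/

open SimpleGraph

variable {V : Type*}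

/-- Utility of the agent occupying vertex `v` in graph `H` under type assignment `τ`:
the fraction of same-type agents among occupied neighbors (0 if no neighbors). -/
noncomputable def utility (H : SimpleGraph V) (τ : V → Bool) (v : V) : ℚ := by
  classical
  exact if H.neighborSet v = ∅ then 0
    else ((H.neighborSet v ∩ {w | τ w = τ v}).ncard : ℚ) / ((H.neighborSet v).ncard : ℚ)

/-- The type function after the agents on vertices `i` and `j` exchange their vertices. -/
noncomputable def swapAt (τ : V → Bool) (i j : V) : V → Bool := fun v => by
  classical
  exact if v = i then τ j else if v = j then τ i else τ v

/-- The swap of the (distinct-type) agents on `i` and `j` strictly increases both utilities. -/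
def ProfitableSwap (H : SimpleGraph V) (τ : V → Bool) (i j : V) : Prop :=
  τ i ≠ τ j ∧
  utility H τ i < utility H (swapAt τ i j) j ∧
  utility H τ j < utility H (swapAt τ i j) i

/-- Swap-equilibrium: no profitable swap exists. -/
def IsSwapEq (H : SimpleGraph V) (τ : V → Bool) : Prop :=
  ∀ i j : V, ¬ ProfitableSwap H τ i j

section SwapAt

variable (τ : V → Bool) (i j : V)

lemma swapAt_left : swapAt τ i j i = τ j := by
  simp [swapAt]

lemma swapAt_right : swapAt τ i j j = τ i := by
  by_cases h : j = i <;> simp [swapAt, h]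

lemma swapAt_of_ne {v : V} (hvi : v ≠ i) (hvj : v ≠ j) : swapAt τ i j v = τ v := by
  simp [swapAt, hvi, hvj]

lemma swapAt_comm : swapAt τ j i = swapAt τ i j := by
  funext v
  by_cases hvi : v = i <;> by_cases hvj : v = j <;> simp_all [swapAt]

end SwapAt

section Utility

variable (H : SimpleGraph V) (τ : V → Bool)

lemma utility_nonneg (v : V) : 0 ≤ utility H τ v := by
  unfold utility
  split
  · exact le_rfl
  · positivity

lemma utility_eq_zero_of_forall_adj_ne {v : V} (h : ∀ w, H.Adj v w → τ w ≠ τ v) :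
    utility H τ v = 0 := by
  have hempty : H.neighborSet v ∩ {w | τ w = τ v} = ∅ :=
    Set.eq_empty_of_forall_notMem fun w ⟨hadj, hw⟩ => h w hadj hw
  unfold utility
  split
  · rfl
  · rw [hempty, Set.ncard_empty, Nat.cast_zero, zero_div]

end Utility

lemma ProfitableSwap.symm {H : SimpleGraph V} {τ : V → Bool} {i j : V}
    (h : ProfitableSwap H τ i j) : ProfitableSwap H τ j i := by
  obtain ⟨hne, hi, hj⟩ := h
  rw [ProfitableSwap, swapAt_comm]
  exact ⟨hne.symm, hj, hi⟩

lemma not_profitableSwap_of_utility_swapAt_left_eq_zero {H : SimpleGraph V} {τ : V → Bool}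
    {i j : V} (h : utility H (swapAt τ i j) i = 0) : ¬ ProfitableSwap H τ i j :=
  fun ⟨_, _, hj⟩ => (utility_nonneg H τ j).not_gt (h ▸ hj)

lemma not_profitableSwap_of_utility_swapAt_right_eq_zero {H : SimpleGraph V} {τ : V → Bool}
    {i j : V} (h : utility H (swapAt τ i j) j = 0) : ¬ ProfitableSwap H τ i j :=
  fun ⟨_, hi, _⟩ => (utility_nonneg H τ i).not_gt (h ▸ hi)

lemma utility_swapAt_left_eq_zero {H : SimpleGraph V} {τ : V → Bool} {x y : V}
    (hx : ∀ w, H.Adj x w → τ w = τ x) (hxy : τ x ≠ τ y) :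
    utility H (swapAt τ x y) x = 0 := by
  refine utility_eq_zero_of_forall_adj_ne H _ fun w hadj => ?_
  rw [swapAt_left]
  by_cases hwy : w = y
  · subst hwy
    rw [swapAt_right]
    exact hxy
  · rw [swapAt_of_ne τ x y (H.ne_of_adj hadj).symm hwy, hx w hadj]
    exact hxy

lemma utility_swapAt_right_eq_zero {H : SimpleGraph V} {τ : V → Bool} {x y : V}
    (hfriends : ∀ w, w ≠ x → τ w = τ x → ∀ u, H.Adj w u → τ u = τ w) (hxy : τ x ≠ τ y) :
    utility H (swapAt τ x y) y = 0 := by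
  refine utility_eq_zero_of_forall_adj_ne H _ fun w hadj => ?_
  rw [swapAt_right]
  by_cases hwx : w = x
  · subst hwx
    rw [swapAt_left]
    exact hxy.symm
  · rw [swapAt_of_ne τ x y hwx (H.ne_of_adj hadj).symm]
    intro hw
    exact hxy ((hfriends w hwx hw y hadj.symm).trans hw).symm

theorem swapEq_of_all_but_one_only_friends_general (G : SimpleGraph V) (τ : V → Bool)
    (h : ∃ i : V, ∀ j : V, j ≠ i → τ j = τ i → ∀ w : V, G.Adj j w → τ w = τ j) :
    IsSwapEq G τ := by
  obtain ⟨i₀, hi₀⟩ := h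
  have of_type : ∀ x y, τ x = τ i₀ → ¬ ProfitableSwap G τ x y := by
    intro x y hx hswap
    by_cases hxi : x = i₀
    · subst hxi
      exact not_profitableSwap_of_utility_swapAt_right_eq_zero
        (utility_swapAt_right_eq_zero hi₀ hswap.1) hswap
    · exact not_profitableSwap_of_utility_swapAt_left_eq_zero
        (utility_swapAt_left_eq_zero (hi₀ x hxi hx) hswap.1) hswap
  intro i j hswap
  by_cases hi : τ i = τ i₀
  · exact of_type i j hi hswap
  · have hj : τ j = τ i₀ := by
      rw [Bool.eq_not_iff.mpr (Ne.symm hswap.1), Bool.eq_not_iff.mpr (Ne.symm hi)]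
    exact of_type j i hj hswap.symm

/-- If there is an agent `i` of some type such that every other agent of that type is
adjacent only to agents of that type, then the assignment is a swap-equilibrium. -/
theorem swapEq_of_all_but_one_only_friends [Fintype V] (G : SimpleGraph V) (τ : V → Bool)
    (h : ∃ i : V, ∀ j : V, j ≠ i → τ j = τ i → ∀ w : V, G.Adj j w → τ w = τ j) :
    IsSwapEq G τ :=
  swapEq_of_all_but_one_only_friends_general G τ h
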